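/- Let X be a finite-dimensional real normed space. If X is (1+ε)-self-extensible for every ε > 0 (equivalently, se(X) = 1), then X has the self-extension property. -/
import Mathlib


/-- For `k ≥ 1`, a real Banach space `X` is **`k`-self-extensible** if every continuous linear
operator on a closed subspace of `X` extends to an operator on `X` of norm at most `k` times
the original norm. -/
def KSelfExt (X : Type*) [NormedAddCommGroup X] [NormedSpace ℝ X] (k : ℝ) : Prop :=
  ∀ (Y : Submodule ℝ X), IsClosed (Y : Set X) → ∀ T : Y →L[ℝ] Y,
    ∃ S : X →L[ℝ] X, (∀ y : Y, S y = (T y : X)) ∧ ‖S‖ ≤ k * ‖T‖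

/-- A real Banach space `X` has the **self-extension property** if every continuous linear
operator on a closed subspace of `X` extends to an operator on `X` with the same norm. -/
def SelfExt (X : Type*) [NormedAddCommGroup X] [NormedSpace ℝ X] : Prop :=
  ∀ (Y : Submodule ℝ X), IsClosed (Y : Set X) → ∀ T : Y →L[ℝ] Y,
    ∃ S : X →L[ℝ] X, (∀ y : Y, S y = (T y : X)) ∧ ‖S‖ = ‖T‖

/-- A finite-dimensional real normed space which is `(1+ε)`-self-extensible for every `ε > 0`
has the self-extension property. -/
theorem selfExt_of_forall_kSelfExt (X : Type*) [NormedAddCommGroup X] [NormedSpace ℝ X]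
    [FiniteDimensional ℝ X] (h : ∀ ε : ℝ, 0 < ε → KSelfExt X (1 + ε)) :
    SelfExt X := by
  intro Y hY T
  choose S hS hSn using fun n : ℕ => h (1 / (n + 1)) (by positivity) Y hY T
  have hcast : ∀ n : ℕ, (0:ℝ) < (n:ℝ) + 1 := by intro n; positivity
  have hbdd : ∀ n, ‖S n‖ ≤ 2 * ‖T‖ := by
    intro n
    refine (hSn n).trans (mul_le_mul_of_nonneg_right ?_ (norm_nonneg T))
    have : (1 : ℝ) / (n + 1) ≤ 1 := by
      rw [div_le_one (hcast n)]
      linarith [Nat.cast_nonneg (α := ℝ) n]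
    linarith
  have hmem : ∀ n, S n ∈ Metric.closedBall (0 : X →L[ℝ] X) (2 * ‖T‖) := by
    intro n; simpa [Metric.mem_closedBall, dist_zero_right] using hbdd n
  obtain ⟨L, -, φ, hφ, hlim⟩ :=
    tendsto_subseq_of_bounded Metric.isBounded_closedBall hmem
  have heval : ∀ y : X, Filter.Tendsto (fun n => S (φ n) y) Filter.atTop (nhds (L y)) := by
    intro y
    exact ((ContinuousLinearMap.apply ℝ X y).continuous.tendsto L).comp hlim
  refine ⟨L, ?_, le_antisymm ?_ ?_⟩
  · intro y
    have h1 := heval (y : X)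
    have h2 : Filter.Tendsto (fun _ : ℕ => (T y : X)) Filter.atTop (nhds ((T y : X))) :=
      tendsto_const_nhds
    have : (fun n => S (φ n) (y : X)) = fun _ : ℕ => (T y : X) := by
      funext n; exact hS (φ n) y
    rw [this] at h1
    exact tendsto_nhds_unique h1 h2
  · -- ‖L‖ ≤ ‖T‖
    have hnorm : Filter.Tendsto (fun n => ‖S (φ n)‖) Filter.atTop (nhds ‖L‖) :=
      (continuous_norm.tendsto L).comp hlim
    have hφtop : Filter.Tendsto φ Filter.atTop Filter.atTop := hφ.tendsto_atTop
    have hb : Filter.Tendsto (fun n => (1 + 1 / ((φ n : ℝ) + 1)) * ‖T‖)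
        Filter.atTop (nhds ((1 + 0) * ‖T‖)) := by
      refine Filter.Tendsto.mul_const _ (Filter.Tendsto.const_add _ ?_)
      exact tendsto_one_div_add_atTop_nhds_zero_nat.comp hφtop
    simp only [add_zero, one_mul] at hb
    exact le_of_tendsto_of_tendsto' hnorm hb (fun n => hSn (φ n))
  · -- ‖T‖ ≤ ‖L‖
    refine ContinuousLinearMap.opNorm_le_bound T (norm_nonneg L) (fun y => ?_)
    have : (T y : X) = L y := by
      have h1 := heval (y : X)
      have : (fun n => S (φ n) (y : X)) = fun _ : ℕ => (T y : X) := by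
        funext n; exact hS (φ n) y
      rw [this] at h1
      exact (tendsto_nhds_unique h1 tendsto_const_nhds).symm
    calc ‖T y‖ = ‖(T y : X)‖ := rfl
      _ = ‖L y‖ := by rw [this]
      _ ≤ ‖L‖ * ‖y‖ := L.le_opNorm y
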